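/- arXiv:1504.03263 — 2 statements merged into one kernel-verified Lean document; each statement's English description precedes it below -/
import Mathlib

section
/- For natural numbers n_1,...,n_k, the arithmetic functions e_{n_1},...,e_{n_k} (indicator functions of singletons) are algebraically independent over ℂ in the Dirichlet convolution ring if and only if n_1,...,n_k are multiplicatively independent. -/
/-!
The monomial `X^d` evaluates at `(e_{n₁}, …, e_{n_k})` to `e_{∏ nᵢ ^ dᵢ}`, and the `e_m` have
disjoint supports, so `p(e_{n₁}, …, e_{n_k})` vanishes only for `p = 0` exactly when
`d ↦ ∏ nᵢ ^ dᵢ` is injective on exponent vectors. Writing an integer exponent vector as a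
difference of two natural ones identifies this injectivity with multiplicative independence.
-/

open ArithmeticFunction
open scoped Classical

/-- The embedding of `ℂ` into the Dirichlet ring of arithmetic functions,
sending `c` to the function with value `c` at `1` and `0` elsewhere. -/
noncomputable def CC : ℂ →+* ArithmeticFunction ℂ where
  toFun c := ⟨fun n => if n = 1 then c else 0, by simp⟩
  map_zero' := by ext n; simp
  map_one' := by ext n; simp [ArithmeticFunction.one_apply]
  map_add' a b := by ext n; erw [ArithmeticFunction.add_apply]; by_cases h : n = 1 <;> simp [h]
  map_mul' a b := by
    ext n
    erw [mul_apply]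
    by_cases h : n = 1
    · subst h
      rw [show Nat.divisorsAntidiagonal 1 = {(1,1)} from rfl]
      simp
    · rw [Finset.sum_eq_zero]
      · simp [h]
      · rintro ⟨d, e⟩ hde
        rw [Nat.mem_divisorsAntidiagonal] at hde
        rcases Decidable.eq_or_ne d 1 with hd | hd
        · have : e ≠ 1 := by rintro rfl; exact h (by simp [← hde.1, hd])
          simp [this]
        · simp [hd]

/-- The order `v f` of an arithmetic function: the least element of the support
(`sInf` of the empty set is `0` for `f = 0`; that case is always excluded by hypotheses). -/
noncomputable def ordN (f : ArithmeticFunction ℂ) : ℕ := sInf {n : ℕ | f n ≠ 0}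

/-- The order as an extended natural number, `⊤` for `f = 0`. -/
noncomputable def ordE (f : ArithmeticFunction ℂ) : ℕ∞ :=
  sInf ((fun n : ℕ => (n : ℕ∞)) '' {n : ℕ | f n ≠ 0})

/-- The norm `‖f‖ = 1/v(f)`, with `1/∞ = 0`. -/
noncomputable def nrm (f : ArithmeticFunction ℂ) : ℝ :=
  if f = 0 then 0 else 1 / (ordN f : ℝ)

/-- Extension of an arithmetic function to `ℝ`, vanishing off `ℕ`. -/
noncomputable def extR (f : ArithmeticFunction ℂ) (x : ℝ) : ℂ :=
  if h : ∃ n : ℕ, (n : ℝ) = x then f h.choose else 0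

/-- The exponential map `Exp f = exp(f 1) * ∑ (f - f 1)^k / k!` of the Dirichlet ring.
Since `(f - f 1)^k` has order `≥ 2^k`, the value of the infinite series at `n` equals the
value of the partial sum up to `k = n`. -/
noncomputable def ExpA (f : ArithmeticFunction ℂ) : ArithmeticFunction ℂ :=
  ⟨fun n => Complex.exp (f 1) *
      ((∑ k ∈ Finset.range (n + 1),
        CC ((Nat.factorial k : ℂ)⁻¹) * (f - CC (f 1)) ^ k) n), by simp⟩

/-- The `p`-basic derivation `(∂_p f) n = v_p (n p) • f (n p)`. -/
noncomputable def DP (p : ℕ) (f : ArithmeticFunction ℂ) : ArithmeticFunction ℂ :=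
  ⟨fun n => (padicValNat p (n * p) : ℂ) * f (n * p), by simp⟩

/-- The log-derivation `(∂_L f) n = log n * f n`. -/
noncomputable def DL (f : ArithmeticFunction ℂ) : ArithmeticFunction ℂ :=
  ⟨fun n => (Real.log n : ℂ) * f n, by simp⟩

/-- The pointwise multiplication operator `𝔪_g`. -/
noncomputable def MG (g f : ArithmeticFunction ℂ) : ArithmeticFunction ℂ :=
  ⟨fun n => g n * f n, by simp⟩

/-- Integer powers `𝔪_g^i` of the pointwise multiplication operator:
`(𝔪_g^i f) n = (g n)^i * f n`. -/
noncomputable def MGi (g : ArithmeticFunction ℂ) (i : ℤ) (f : ArithmeticFunction ℂ) :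
    ArithmeticFunction ℂ := ⟨fun n => g n ^ i * f n, by simp⟩

/-- `D` is a (ℂ-linear) derivation of the ring of arithmetic functions
under Dirichlet convolution. -/
def IsDerivationA (D : ArithmeticFunction ℂ → ArithmeticFunction ℂ) : Prop :=
  (∀ f g, D (f + g) = D f + D g) ∧
  (∀ (c : ℂ) (f), D (CC c * f) = CC c * D f) ∧
  (∀ f g, D (f * g) = D f * g + f * D g)

/-- Convergence of a sequence of arithmetic functions in the norm topology. -/
def TendstoA (s : ℕ → ArithmeticFunction ℂ) (l : ArithmeticFunction ℂ) : Prop :=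
  Filter.Tendsto (fun m => nrm (s m - l)) Filter.atTop (nhds 0)

/-- (Sequential) continuity of a map in the norm topology, which for this
ultrametric is equivalent to continuity. -/
def ContinuousA (D : ArithmeticFunction ℂ → ArithmeticFunction ℂ) : Prop :=
  ∀ (s : ℕ → ArithmeticFunction ℂ) (l), TendstoA s l → TendstoA (fun m => D (s m)) (D l)

/-- The indicator function `e_m` of the singleton `{m}`. -/
noncomputable def En (m : ℕ) : ArithmeticFunction ℂ :=
  ⟨fun n => if 0 < n ∧ n = m then 1 else 0, by simp⟩

/-- The constant one arithmetic function `𝟙`. -/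
noncomputable def OneA : ArithmeticFunction ℂ := ⟨fun n => if n = 0 then 0 else 1, by simp⟩

/-- The ℂ-algebra structure of the ring of arithmetic functions, via `CC`. -/
noncomputable instance : Algebra ℂ (ArithmeticFunction ℂ) := CC.toAlgebra

theorem injective_prod_pow_iff {σ G₀ : Type*} [Fintype σ] [CommGroupWithZero G₀] {x : σ → G₀}
    (hx : ∀ i, x i ≠ 0) :
    Function.Injective (fun d : σ →₀ ℕ => ∏ i, x i ^ d i) ↔
      ∀ a : σ → ℤ, ∏ i, x i ^ a i = 1 → ∀ i, a i = 0 := by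
  have prod_zpow_sub (a b : σ → ℕ) :
      ∏ i, x i ^ ((a i : ℤ) - b i) = (∏ i, x i ^ a i) / ∏ i, x i ^ b i := by
    simp only [zpow_sub₀ (hx _), zpow_natCast, Finset.prod_div_distrib]
  have hprod_ne (a : σ → ℕ) : ∏ i, x i ^ a i ≠ 0 :=
    Finset.prod_ne_zero_iff.mpr fun i _ => pow_ne_zero _ (hx i)
  constructor
  · intro hinj a ha
    let pos : σ →₀ ℕ := Finsupp.equivFunOnFinite.symm fun i => (a i).toNat
    let neg : σ →₀ ℕ := Finsupp.equivFunOnFinite.symm fun i => (-a i).toNat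
    have ha_sub : ∀ i, a i = (pos i : ℤ) - neg i := fun i => by simp [pos, neg]
    have hprod_eq : ∏ i, x i ^ pos i = ∏ i, x i ^ neg i := by
      rw [← div_eq_one_iff_eq (hprod_ne _), ← prod_zpow_sub, ← ha]
      simp only [← ha_sub]
    intro i
    rw [ha_sub, hinj hprod_eq, sub_self]
  · intro hmul d d' hdd'
    have h : ∏ i, x i ^ ((d i : ℤ) - d' i) = 1 := by
      rw [prod_zpow_sub, div_eq_one_iff_eq (hprod_ne _)]
      exact hdd'
    ext i
    have := hmul _ h i
    omega

lemma En_apply (m q : ℕ) : En m q = if 0 < q ∧ q = m then 1 else 0 := rfl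

lemma En_one : En 1 = 1 := by
  ext q
  by_cases h : q = 1 <;> simp [En_apply, h]

lemma En_mul {a b : ℕ} (ha : 0 < a) (hb : 0 < b) : En a * En b = En (a * b) := by
  ext q
  rw [mul_apply, En_apply]
  split_ifs with hq
  · obtain ⟨-, rfl⟩ := hq
    rw [Finset.sum_eq_single_of_mem (a, b) (by simp [ha.ne', hb.ne'])]
    · simp [En_apply, ha, hb]
    · rintro ⟨d, e⟩ hde hne
      simp only [En_apply, mul_ite, mul_one, mul_zero]
      grind [Nat.mem_divisorsAntidiagonal, Nat.eq_of_mul_eq_mul_left]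
  · refine Finset.sum_eq_zero fun ⟨d, e⟩ hde => ?_
    simp only [En_apply, mul_ite, mul_one, mul_zero]
    grind [Nat.mem_divisorsAntidiagonal]

lemma En_pow {a : ℕ} (ha : 0 < a) (m : ℕ) : En a ^ m = En (a ^ m) := by
  induction m with
  | zero => simp [En_one]
  | succ m ih => rw [pow_succ, ih, En_mul (by positivity) ha, pow_succ]

lemma prod_En {ι : Type*} (s : Finset ι) {f : ι → ℕ} (hf : ∀ i ∈ s, 0 < f i) :
    ∏ i ∈ s, En (f i) = En (∏ i ∈ s, f i) := by
  induction s using Finset.cons_induction with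
  | empty => simp [En_one]
  | cons a s ha ih =>
    rw [Finset.forall_mem_cons] at hf
    rw [Finset.prod_cons, Finset.prod_cons, ih hf.2, En_mul hf.1 (Finset.prod_pos hf.2)]

lemma CC_apply (c : ℂ) (q : ℕ) : CC c q = if q = 1 then c else 0 := rfl

lemma algebraMap_mul_apply (c : ℂ) (f : ArithmeticFunction ℂ) (q : ℕ) :
    (algebraMap ℂ (ArithmeticFunction ℂ) c * f) q = c * f q := by
  rw [RingHom.algebraMap_toAlgebra]
  rcases Nat.eq_zero_or_pos q with rfl | hq
  · simp
  rw [mul_apply, Finset.sum_eq_single_of_mem (1, q) (by simp [hq.ne'])]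
  · simp [CC_apply]
  · rintro ⟨d, e⟩ hde hne
    have hd : d ≠ 1 := by rintro rfl; simp_all
    simp [CC_apply, hd]

section AevalEn

variable {σ : Type*} [Fintype σ] {n : σ → ℕ}

lemma aeval_En_monomial (hn : ∀ i, 0 < n i) (d : σ →₀ ℕ) (c : ℂ) :
    MvPolynomial.aeval (fun i => En (n i)) (MvPolynomial.monomial d c) =
      algebraMap ℂ _ c * En (∏ i, n i ^ d i) := by
  rw [MvPolynomial.aeval_monomial, Finsupp.prod_fintype _ _ fun i => pow_zero _]
  simp only [En_pow (hn _)]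
  rw [prod_En _ fun i _ => pow_pos (hn i) _]

lemma aeval_En_apply_prod_pow (hn : ∀ i, 0 < n i)
    (hinj : Function.Injective (fun d : σ →₀ ℕ => ∏ i, n i ^ d i))
    (p : MvPolynomial σ ℂ) (d : σ →₀ ℕ) :
    MvPolynomial.aeval (fun i => En (n i)) p (∏ i, n i ^ d i) = p.coeff d := by
  induction p using MvPolynomial.induction_on' with
  | monomial d' c =>
    rw [aeval_En_monomial hn, algebraMap_mul_apply, En_apply, MvPolynomial.coeff_monomial]
    by_cases hd : d' = d
    · subst hd
      simp [Finset.prod_pos fun i _ => pow_pos (hn i) _]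
    · have hprod : ∏ i, n i ^ d i ≠ ∏ i, n i ^ d' i := fun h => hd (hinj h).symm
      simp [hd, hprod]
  | add p q hp hq => rw [map_add, ArithmeticFunction.add_apply, hp, hq, MvPolynomial.coeff_add]

theorem algebraicIndependent_En_iff (hn : ∀ i, 0 < n i) :
    AlgebraicIndependent ℂ (fun i => En (n i)) ↔
      Function.Injective (fun d : σ →₀ ℕ => ∏ i, n i ^ d i) := by
  constructor
  · intro hind d d' hdd'
    have hmonomial : MvPolynomial.monomial d (1 : ℂ) = MvPolynomial.monomial d' 1 :=
      hind <| by simp only [aeval_En_monomial hn]; congr 2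
    exact (MvPolynomial.monomial_left_inj one_ne_zero).mp hmonomial
  · intro hinj
    refine algebraicIndependent_iff.mpr fun p hp => MvPolynomial.ext _ _ fun d => ?_
    rw [← aeval_En_apply_prod_pow hn hinj, hp, MvPolynomial.coeff_zero,
      ArithmeticFunction.zero_apply]

end AevalEn

/-- The indicator functions `e_{n 1}, …, e_{n k}` are algebraically independent over `ℂ`
in the Dirichlet ring if and only if `n 1, …, n k` are multiplicatively independent. -/
theorem stmt15 (k : ℕ) (n : Fin k → ℕ) (hn : ∀ i, 0 < n i) :
    AlgebraicIndependent ℂ (fun i => En (n i)) ↔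
      (∀ a : Fin k → ℤ, (∏ i, (n i : ℚ) ^ (a i)) = 1 → ∀ i, a i = 0) := by
  have hcast : (fun d : Fin k →₀ ℕ => ∏ i, (n i : ℚ) ^ d i) =
      Nat.cast ∘ fun d : Fin k →₀ ℕ => ∏ i, n i ^ d i := by
    ext d; simp
  rw [algebraicIndependent_En_iff hn,
    ← injective_prod_pow_iff fun i => Nat.cast_ne_zero.mpr (hn i).ne', hcast,
    Function.Injective.of_comp_iff Nat.cast_injective]
end

section
/- The subalgebra 𝒮 of arithmetic functions whose support has only finitely many prime divisors is algebraically closed in the Dirichlet convolution ring 𝒜: every f ∈ 𝒜 that is algebraic over 𝒮 already belongs to 𝒮. -/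
open ArithmeticFunction
open scoped Classical

/-- `f` has finitely generated support: only finitely many primes divide members of
the support of `f`, i.e. `f ∈ 𝒮`. -/
def FinPrimeSupp (f : ArithmeticFunction ℂ) : Prop :=
  {p : ℕ | p.Prime ∧ ∃ n : ℕ, f n ≠ 0 ∧ p ∣ n}.Finite

/-!
For a prime `p`, the map `f ↦ (n ↦ v_p(n) f(n))` is a derivation of the Dirichlet ring, because
`v_p` is completely additive, and its kernel consists of the functions vanishing on multiples of
`p`. When `p` divides no element of the supports of the coefficients of `P`, this derivation kills
the coefficients. In a domain of characteristic zero, a derivation kills every root of a nonzero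
polynomial whose coefficients it kills: differentiating a relation of minimal degree gives
`P'(f) · Df = 0` with `P'(f) ≠ 0`. Hence `f` vanishes on the multiples of all but finitely many
primes.
-/

open Polynomial

namespace ArithmeticFunction

variable {R : Type*}

theorem mul_apply_mul_of_eq_zero_of_lt [Semiring R] {f g : ArithmeticFunction R} {a b : ℕ}
    (hf : ∀ d < a, f d = 0) (hg : ∀ e < b, g e = 0) : (f * g) (a * b) = f a * g b := by
  rcases Nat.eq_zero_or_pos (a * b) with hab | hab
  · rcases Nat.mul_eq_zero.1 hab with rfl | rfl <;> simp
  rw [mul_apply, Finset.sum_eq_single_of_mem (a, b)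
    (Nat.mem_divisorsAntidiagonal.2 ⟨rfl, hab.ne'⟩)]
  rintro ⟨d, e⟩ hde hne
  obtain ⟨hde, -⟩ := Nat.mem_divisorsAntidiagonal.1 hde
  dsimp only at hde ⊢
  rcases lt_or_ge d a with hd | hd
  · simp [hf d hd]
  rcases lt_or_ge e b with he | he
  · simp [hg e he]
  obtain rfl : d = a := by
    by_contra hda
    have : a * b < d * e := calc
      a * b < d * b := Nat.mul_lt_mul_of_pos_right (lt_of_le_of_ne hd (Ne.symm hda))
        (Nat.pos_of_mul_pos_left hab)
      _ ≤ d * e := Nat.mul_le_mul_left d he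
    omega
  exact absurd (by rw [Nat.eq_of_mul_eq_mul_left (Nat.pos_of_mul_pos_right hab) hde]) hne

instance [Semiring R] [NoZeroDivisors R] : NoZeroDivisors (ArithmeticFunction R) where
  eq_zero_or_eq_zero_of_mul_eq_zero {f g} hfg := by
    by_contra! h
    have hf : ∃ n, f n ≠ 0 := by by_contra! hf; exact h.1 (ext hf)
    have hg : ∃ n, g n ≠ 0 := by by_contra! hg; exact h.2 (ext hg)
    have hleast := mul_apply_mul_of_eq_zero_of_lt (fun d hd => not_not.1 (Nat.find_min hf hd))
      (fun e he => not_not.1 (Nat.find_min hg he))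
    rw [hfg, zero_apply] at hleast
    exact mul_ne_zero (Nat.find_spec hf) (Nat.find_spec hg) hleast.symm

instance [AddMonoidWithOne R] [CharZero R] : CharZero (ArithmeticFunction R) where
  cast_injective m n h := Nat.cast_injective (R := R) <| by
    simpa using (congr($h 1) : (if 1 = 1 then (m : R) else 0) = if 1 = 1 then (n : R) else 0)

noncomputable def pmulAddHom [Semiring R] (w : ℕ → R) :
    ArithmeticFunction R →+ ArithmeticFunction R where
  toFun f := ⟨fun n => w n * f n, by simp⟩
  map_zero' := by ext; simp
  map_add' f g := by ext n; exact mul_add (w n) (f n) (g n)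

@[simp]
theorem pmulAddHom_apply [Semiring R] (w : ℕ → R) (f : ArithmeticFunction R) (n : ℕ) :
    pmulAddHom w f n = w n * f n := rfl

theorem pmulAddHom_mul [CommSemiring R] {w : ℕ → R}
    (hw : ∀ {m n}, m ≠ 0 → n ≠ 0 → w (m * n) = w m + w n) (f g : ArithmeticFunction R) :
    pmulAddHom w (f * g) = f * pmulAddHom w g + g * pmulAddHom w f := by
  ext n
  rw [mul_comm g]
  simp only [pmulAddHom_apply, add_apply, mul_apply, Finset.mul_sum, ← Finset.sum_add_distrib]
  refine Finset.sum_congr rfl fun x hx => ?_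
  obtain ⟨rfl, hx0⟩ := Nat.mem_divisorsAntidiagonal.1 hx
  rw [hw (left_ne_zero_of_mul hx0) (right_ne_zero_of_mul hx0)]
  ring

section padicValNat

variable (p : ℕ) [Fact p.Prime]

theorem pmulAddHom_padicValNat_mul [CommSemiring R] (f g : ArithmeticFunction R) :
    pmulAddHom (fun n => (padicValNat p n : R)) (f * g) =
      f * pmulAddHom (fun n => (padicValNat p n : R)) g +
        g * pmulAddHom (fun n => (padicValNat p n : R)) f :=
  pmulAddHom_mul (fun hm hn => by rw [padicValNat.mul hm hn, Nat.cast_add]) f g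

theorem pmulAddHom_padicValNat_eq_zero_iff [Semiring R] [CharZero R] [NoZeroDivisors R]
    {f : ArithmeticFunction R} :
    pmulAddHom (fun n => (padicValNat p n : R)) f = 0 ↔ ∀ n, p ∣ n → f n = 0 := by
  refine ⟨fun h n hpn => ?_, fun h => ext fun n => ?_⟩
  · rcases eq_or_ne n 0 with rfl | hn
    · exact f.map_zero
    have hv : (padicValNat p n : R) ≠ 0 :=
      Nat.cast_ne_zero.2 (Nat.one_le_iff_ne_zero.1 (one_le_padicValNat_of_dvd hn hpn))
    simpa [hv] using congr($h n)
  · by_cases hpn : p ∣ n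
    · simp [h n hpn]
    · simp [padicValNat.eq_zero_of_not_dvd hpn]

end padicValNat

end ArithmeticFunction

/- Derivations are taken as additive maps satisfying the Leibniz rule rather than as
`Derivation ℤ A A`: on `ArithmeticFunction R` the instance `Algebra ℤ (ArithmeticFunction R)`
acts pointwise and is not defeq to the canonical `ℤ`-module structure. -/
namespace AddMonoidHom

variable {A : Type*} [CommRing A] (D : A →+ A)

theorem apply_natCast_of_leibniz (hD : ∀ a b, D (a * b) = a * D b + b * D a) (n : ℕ) :
    D n = 0 := by
  have h1 : D 1 = 0 := by simpa using hD 1 1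
  rw [← nsmul_one, map_nsmul, h1, smul_zero]

theorem apply_eval_of_leibniz (hD : ∀ a b, D (a * b) = a * D b + b * D a) {P : A[X]}
    (hPD : ∀ k, D (P.coeff k) = 0) (a : A) :
    D (P.eval a) = P.derivative.eval a * D a := by
  have h := (Derivation.mk' D.toIntLinearMap hD).apply_eval_eq a P
  have h0 : (Derivation.mk' D.toIntLinearMap hD).mapCoeffs P = 0 := by
    ext i
    exact hPD i
  rwa [h0, _root_.map_zero, zero_add] at h

theorem eq_zero_of_leibniz_of_eval_eq_zero [NoZeroDivisors A] [CharZero A]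
    (hD : ∀ a b, D (a * b) = a * D b + b * D a) {P : A[X]} (hP : P ≠ 0)
    (hPD : ∀ k, D (P.coeff k) = 0) {a : A} (ha : P.eval a = 0) : D a = 0 := by
  induction hn : P.natDegree using Nat.strong_induction_on generalizing P with
  | _ n ih =>
    have hn0 : P.natDegree ≠ 0 := fun h0 => hP <| by
      rw [eq_C_of_natDegree_eq_zero h0, eval_C] at ha
      rw [eq_C_of_natDegree_eq_zero h0, ha, C_0]
    have hP'D : ∀ k, D (P.derivative.coeff k) = 0 := fun k => by
      rw [coeff_derivative, hD, hPD, mul_zero, add_zero, ← Nat.cast_add_one,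
        D.apply_natCast_of_leibniz hD, mul_zero]
    have hDeval := D.apply_eval_of_leibniz hD hPD a
    rw [ha, _root_.map_zero, eq_comm, mul_eq_zero] at hDeval
    rcases hDeval with hP'a | hDa
    · exact ih _ (hn ▸ natDegree_derivative_lt hn0) (derivative_ne_zero.2 hn0) hP'D hP'a rfl
    · exact hDa

end AddMonoidHom

/-- `𝒮` is algebraically closed in the Dirichlet ring `𝒜`: any `f` satisfying a nonzero
polynomial with coefficients in `𝒮` (powers being convolution powers) lies in `𝒮`. -/
theorem stmt16 (f : ArithmeticFunction ℂ) (P : Polynomial (ArithmeticFunction ℂ))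
    (hP : P ≠ 0) (hcoeff : ∀ k, FinPrimeSupp (P.coeff k))
    (hroot : Polynomial.eval f P = 0) :
    FinPrimeSupp f := by
  refine (P.support.finite_toSet.biUnion fun k _ => hcoeff k).subset ?_
  rintro p ⟨hp, n, hfn, hpn⟩
  by_contra hpT
  have := Fact.mk hp
  have hPD : ∀ k, pmulAddHom (fun n => (padicValNat p n : ℂ)) (P.coeff k) = 0 := fun k =>
    (pmulAddHom_padicValNat_eq_zero_iff p).2 fun m hpm => by
      by_contra hm
      exact hpT (Set.mem_biUnion (mem_support_iff.2 fun h => hm (by simp [h])) ⟨hp, m, hm, hpm⟩)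
  have hDf := AddMonoidHom.eq_zero_of_leibniz_of_eval_eq_zero _ (pmulAddHom_padicValNat_mul p)
    hP hPD hroot
  exact hfn ((pmulAddHom_padicValNat_eq_zero_iff p).1 hDf n hpn)
end
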